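/- (Necessity part of Theorem 2, concrete form.) Let A, R, Q be n×n real matrices with R and Q positive definite, define H(d) = Σ_{i=0}^{d−1} A^i R (A^i)ᵀ and c(d, l) = Σ_{i=d}^{d+l−1} Tr(Q·H(i)), and let ρ(A) denote the spectral radius of A. Let g : ℕ → (0,1) be nonincreasing, let (l_j)_{j≥1} be a sequence of natural numbers with l_j ≥ 1, and set L_i = Σ_{j=1}^{i} l_j. If the series Σ_{i=1}^∞ (Π_{j=1}^{i−1} g(l_j)) · (1 − g(l_i)) · c(1, L_i) converges, then there exists j with g(l_j) · ρ(A)^{2 l_j} < 1; in particular min_{l ≥ 1} g(l)·ρ(A)^{2l} < 1. -/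

import Mathlib

open Matrix

/-- `covH A R d = ∑_{i=0}^{d-1} Aⁱ R (Aⁱ)ᵀ`, the state covariance matrix at
age-of-information `d`. -/
noncomputable def covH {n : ℕ} (A R : Matrix (Fin n) (Fin n) ℝ) (d : ℕ) :
    Matrix (Fin n) (Fin n) ℝ :=
  ∑ i ∈ Finset.range d, A ^ i * R * (A ^ i)ᵀ

/-- `stageCost A R Q d l = ∑_{i=d}^{d+l-1} Tr(Q·H(i))`, the one-stage cost of a
packet of length `l` started at age-of-information `d`. -/
noncomputable def stageCost {n : ℕ} (A R Q : Matrix (Fin n) (Fin n) ℝ)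
    (d l : ℕ) : ℝ :=
  ∑ i ∈ Finset.Ico d (d + l), (Q * covH A R i).trace

/-- The spectral radius of a real matrix: the maximum modulus of its complex
eigenvalues. -/
noncomputable def specRad {n : ℕ} (A : Matrix (Fin n) (Fin n) ℝ) : ℝ :=
  sSup ((fun z : ℂ => ‖z‖) '' spectrum ℂ (A.map Complex.ofReal))

/-!
Suppose every packet had `g(l_j) ρ(A)^(2 l_j) ≥ 1`, so in particular `ρ(A) > 1`. For an eigenvalue
`μ` of maximal modulus, `μ^k` lies in the spectrum of `A^k`, so `ρ(A)^k ≤ √n ‖A^k‖_F`; since `Q` and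
`R` dominate positive multiples of the identity, this gives `c(1, L + 1) ≥ c ρ(A)^(2L)` for some
`c > 0`. The survival probability `∏_{j<i} g(l_j)` is then beaten by the cost growth
`ρ(A)^(2 L_i)`, and every summand is at least `(1 - g(1)) c > 0`, so the series diverges.
-/

namespace Matrix

variable {ι : Type*} [Fintype ι]

section PosDef

open scoped MatrixOrder

variable [DecidableEq ι]

theorem PosDef.exists_pos_algebraMap_le {Q : Matrix ι ι ℝ} (hQ : Q.PosDef) :
    ∃ r > 0, algebraMap ℝ (Matrix ι ι ℝ) r ≤ Q := by
  rcases subsingleton_or_nontrivial (Matrix ι ι ℝ) with _ | _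
  · exact ⟨1, one_pos, (Subsingleton.elim _ _).le⟩
  exact (CFC.exists_pos_algebraMap_le_iff hQ.isHermitian.isSelfAdjoint).2
    fun _ hx => hQ.isStrictlyPositive.spectrum_pos hx

theorem PosSemidef.trace_mul_nonneg {P X : Matrix ι ι ℝ} (hP : P.PosSemidef)
    (hX : X.PosSemidef) : 0 ≤ (P * X).trace := by
  obtain ⟨B, rfl⟩ := CStarAlgebra.nonneg_iff_eq_star_mul_self.mp hX.nonneg
  rw [← Matrix.mul_assoc, trace_mul_cycle]
  exact (hP.mul_mul_conjTranspose_same B).trace_nonneg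

theorem PosDef.exists_pos_mul_trace_le {Q : Matrix ι ι ℝ} (hQ : Q.PosDef) :
    ∃ r > 0, ∀ X : Matrix ι ι ℝ, X.PosSemidef → r * X.trace ≤ (Q * X).trace := by
  obtain ⟨r, hr, hrQ⟩ := hQ.exists_pos_algebraMap_le
  refine ⟨r, hr, fun X hX => ?_⟩
  have := (le_iff.mp hrQ).trace_mul_nonneg hX
  rwa [Algebra.algebraMap_eq_smul_one, sub_mul, trace_sub, smul_mul, Matrix.one_mul,
    trace_smul, smul_eq_mul, sub_nonneg] at this

end PosDef

section Frobenius

open scoped Matrix.Norms.Frobenius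

theorem frobenius_norm_sq_eq_trace (A : Matrix ι ι ℝ) : ‖A‖ ^ 2 = (Aᵀ * A).trace := by
  rw [frobenius_norm_def, ← Real.sqrt_eq_rpow, Real.sq_sqrt (by positivity), Finset.sum_comm]
  simp only [trace, diag, mul_apply, transpose_apply, Real.norm_eq_abs, Real.rpow_two, sq,
    abs_mul_abs_self]

theorem norm_sq_le_card_mul_trace_of_mem_spectrum [DecidableEq ι] {A : Matrix ι ι ℝ} {μ : ℂ}
    (hμ : μ ∈ spectrum ℂ (A.map Complex.ofReal)) :
    ‖μ‖ ^ 2 ≤ Fintype.card ι * (Aᵀ * A).trace := by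
  have hμA : ‖μ‖ ≤ ‖A.map Complex.ofReal‖ * ‖(1 : Matrix ι ι ℂ)‖ := by
    simpa using spectrum.subset_closedBall_norm_mul _ hμ
  have hone : ‖(1 : Matrix ι ι ℂ)‖ = √(Fintype.card ι) := by
    simpa using congrArg NNReal.toReal (frobenius_nnnorm_one (n := ι) (α := ℂ))
  rw [frobenius_norm_map_eq _ _ Complex.norm_real, hone] at hμA
  calc ‖μ‖ ^ 2 ≤ (‖A‖ * √(Fintype.card ι)) ^ 2 := pow_le_pow_left₀ (norm_nonneg μ) hμA 2
    _ = Fintype.card ι * (Aᵀ * A).trace := by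
      rw [mul_pow, Real.sq_sqrt (Nat.cast_nonneg _), frobenius_norm_sq_eq_trace, mul_comm]

end Frobenius

end Matrix

section SpectralRadius

variable {n : ℕ} (A : Matrix (Fin n) (Fin n) ℝ)

theorem specRad_nonneg : 0 ≤ specRad A :=
  Real.sSup_nonneg (by rintro _ ⟨μ, -, rfl⟩; exact norm_nonneg μ)

theorem exists_mem_spectrum_norm_eq_specRad (hA : 0 < specRad A) :
    ∃ μ ∈ spectrum ℂ (A.map Complex.ofReal), ‖μ‖ = specRad A := by
  have hne : (spectrum ℂ (A.map Complex.ofReal)).Nonempty := by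
    by_contra h
    rw [Set.not_nonempty_iff_eq_empty] at h
    simp [specRad, h] at hA
  exact (hne.image _).csSup_mem ((Matrix.finite_spectrum _).image _)

theorem specRad_pow_le_card_mul_trace (hA : 0 < specRad A) (k : ℕ) :
    specRad A ^ (2 * k) ≤ n * ((A ^ k)ᵀ * A ^ k).trace := by
  obtain ⟨μ, hμ, hμA⟩ := exists_mem_spectrum_norm_eq_specRad A hA
  have hμk : μ ^ k ∈ spectrum ℂ ((A ^ k).map Complex.ofReal) :=
    Matrix.map_pow A Complex.ofRealHom k ▸ spectrum.pow_mem_pow _ k hμ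
  simpa [← hμA, pow_mul', norm_pow] using Matrix.norm_sq_le_card_mul_trace_of_mem_spectrum hμk

end SpectralRadius

section Cost

variable {n : ℕ} {A R Q : Matrix (Fin n) (Fin n) ℝ}

theorem trace_mul_covH (d : ℕ) :
    (Q * covH A R d).trace = ∑ i ∈ Finset.range d, (Q * (A ^ i * R * (A ^ i)ᵀ)).trace := by
  rw [covH, Matrix.mul_sum, Matrix.trace_sum]

theorem trace_mul_conj_nonneg (hQ : Q.PosSemidef) (hR : R.PosSemidef)
    (B : Matrix (Fin n) (Fin n) ℝ) : 0 ≤ (Q * (B * R * Bᵀ)).trace :=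
  hQ.trace_mul_nonneg (by simpa using hR.mul_mul_conjTranspose_same B)

theorem trace_mul_covH_nonneg (hQ : Q.PosSemidef) (hR : R.PosSemidef) (d : ℕ) :
    0 ≤ (Q * covH A R d).trace := by
  rw [trace_mul_covH]
  exact Finset.sum_nonneg fun i _ => trace_mul_conj_nonneg hQ hR _

theorem stageCost_mono (hQ : Q.PosSemidef) (hR : R.PosSemidef) (d : ℕ) :
    Monotone (stageCost A R Q d) := fun _ _ hl =>
  Finset.sum_le_sum_of_subset_of_nonneg (Finset.Ico_subset_Ico_right (by omega))
    fun _ _ _ => trace_mul_covH_nonneg hQ hR _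

theorem trace_mul_conj_pow_le_stageCost_one (hQ : Q.PosSemidef) (hR : R.PosSemidef) (L : ℕ) :
    (Q * (A ^ L * R * (A ^ L)ᵀ)).trace ≤ stageCost A R Q 1 (L + 1) :=
  calc (Q * (A ^ L * R * (A ^ L)ᵀ)).trace ≤ (Q * covH A R (L + 1)).trace := by
        rw [trace_mul_covH]
        exact Finset.single_le_sum (fun i _ => trace_mul_conj_nonneg hQ hR _)
          (Finset.self_mem_range_succ L)
    _ ≤ stageCost A R Q 1 (L + 1) :=
        Finset.single_le_sum (fun d _ => trace_mul_covH_nonneg hQ hR d)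
          (Finset.mem_Ico.2 ⟨by omega, by omega⟩)

theorem exists_pos_mul_specRad_pow_le_trace (hQ : Q.PosDef) (hR : R.PosDef)
    (hA : 0 < specRad A) :
    ∃ c > 0, ∀ k, c * specRad A ^ (2 * k) ≤ (Q * (A ^ k * R * (A ^ k)ᵀ)).trace := by
  obtain ⟨rQ, hrQ, hQX⟩ := hQ.exists_pos_mul_trace_le
  obtain ⟨rR, hrR, hRX⟩ := hR.exists_pos_mul_trace_le
  have hn : (0 : ℝ) < n := by
    obtain ⟨μ, hμ, -⟩ := exists_mem_spectrum_norm_eq_specRad A hA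
    rcases Nat.eq_zero_or_pos n with rfl | hn
    · simp [spectrum.of_subsingleton] at hμ
    · exact_mod_cast hn
  refine ⟨rQ * rR / n, by positivity, fun k => ?_⟩
  set B := A ^ k
  calc rQ * rR / n * specRad A ^ (2 * k) ≤ rQ * rR / n * (n * (Bᵀ * B).trace) :=
        mul_le_mul_of_nonneg_left (specRad_pow_le_card_mul_trace A hA k) (by positivity)
    _ = rQ * (rR * (Bᵀ * B).trace) := by field_simp
    _ ≤ rQ * (R * (Bᵀ * B)).trace :=
        mul_le_mul_of_nonneg_left (hRX _ (by simpa using posSemidef_conjTranspose_mul_self B))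
          hrQ.le
    _ = rQ * (B * R * Bᵀ).trace := by rw [Matrix.trace_mul_cycle, Matrix.trace_mul_comm]
    _ ≤ (Q * (B * R * Bᵀ)).trace :=
        hQX _ (by simpa using hR.posSemidef.mul_mul_conjTranspose_same B)

end Cost

section Series

/-- The summand of the virtual average-cost numerator in which the first `i` packets fail and
packet `i` (0-indexed) succeeds. -/
def virtualCostTerm (g : ℕ → ℝ) (l : ℕ → ℕ) (C : ℕ → ℝ) (i : ℕ) : ℝ :=
  (∏ j ∈ Finset.range i, g (l j)) * (1 - g (l i)) * C (∑ j ∈ Finset.range (i + 1), l j)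

variable {g : ℕ → ℝ} {l : ℕ → ℕ} {ρ : ℝ}

theorem one_le_prod_mul_pow_sum (h : ∀ j, 1 ≤ g (l j) * ρ ^ (2 * l j)) (i : ℕ) :
    1 ≤ (∏ j ∈ Finset.range i, g (l j)) * ρ ^ (2 * ∑ j ∈ Finset.range i, l j) := by
  rw [Finset.mul_sum, ← Finset.prod_pow_eq_pow_sum, ← Finset.prod_mul_distrib]
  exact Finset.one_le_prod fun j _ => h j

theorem one_sub_mul_le_virtualCostTerm {C : ℕ → ℝ} {c : ℝ} (hc : 0 ≤ c)
    (hg : ∀ k, g k ∈ Set.Icc (0 : ℝ) 1) (hgmono : Antitone g) (hl : ∀ j, 1 ≤ l j)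
    (hC : ∀ L, c * ρ ^ (2 * L) ≤ C (L + 1)) (hCmono : Monotone C)
    (h : ∀ j, 1 ≤ g (l j) * ρ ^ (2 * l j)) (i : ℕ) :
    (1 - g 1) * c ≤ virtualCostTerm g l C i := by
  set P := ∏ j ∈ Finset.range i, g (l j)
  set L := ∑ j ∈ Finset.range i, l j
  have hP : 0 ≤ P := Finset.prod_nonneg fun j _ => (hg _).1
  have hPL : 1 ≤ P * ρ ^ (2 * L) := one_le_prod_mul_pow_sum h i
  have hgi : 1 - g 1 ≤ 1 - g (l i) := sub_le_sub_left (hgmono (hl i)) 1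
  have hgi' : 0 ≤ 1 - g (l i) := sub_nonneg.2 (hg (l i)).2
  have hCi : c * ρ ^ (2 * L) ≤ C (∑ j ∈ Finset.range (i + 1), l j) :=
    (hC L).trans (hCmono (by rw [Finset.sum_range_succ]; exact Nat.add_le_add_left (hl i) L))
  calc (1 - g 1) * c ≤ (1 - g (l i)) * c := mul_le_mul_of_nonneg_right hgi hc
    _ ≤ (1 - g (l i)) * c * (P * ρ ^ (2 * L)) := le_mul_of_one_le_right (by positivity) hPL
    _ = P * (1 - g (l i)) * (c * ρ ^ (2 * L)) := by ring
    _ ≤ virtualCostTerm g l C i := mul_le_mul_of_nonneg_left hCi (by positivity)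

end Series

/-- Packet lengths are 0-indexed: `l j` is the length of packet `j + 1`, and
`∑ j ∈ Finset.range (i + 1), l j` is `L_{i+1}`. -/
theorem variable_length_stability_necessity {n : ℕ}
    (A R Q : Matrix (Fin n) (Fin n) ℝ)
    (hR : R.PosDef) (hQ : Q.PosDef)
    (g : ℕ → ℝ) (hg : ∀ k, g k ∈ Set.Ioo (0 : ℝ) 1) (hgmono : Antitone g)
    (l : ℕ → ℕ) (hl : ∀ j, 1 ≤ l j)
    (hsum : Summable (fun i : ℕ =>
      (∏ j ∈ Finset.range i, g (l j)) * (1 - g (l i)) *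
        stageCost A R Q 1 (∑ j ∈ Finset.range (i + 1), l j))) :
    (∃ j, g (l j) * specRad A ^ (2 * l j) < 1) ∧
      (∃ m : ℕ, 1 ≤ m ∧ g m * specRad A ^ (2 * m) < 1) := by
  suffices key : ∃ j, g (l j) * specRad A ^ (2 * l j) < 1 from
    ⟨key, key.elim fun j hj => ⟨l j, hl j, hj⟩⟩
  rcases le_or_gt (specRad A) 1 with hρ | hρ
  · exact ⟨0, (mul_le_of_le_one_right (hg _).1.le
      (pow_le_one₀ (specRad_nonneg A) hρ)).trans_lt (hg _).2⟩
  by_contra! hcon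
  obtain ⟨c, hc, hcA⟩ := exists_pos_mul_specRad_pow_le_trace hQ hR (one_pos.trans hρ)
  have hcost : ∀ L, c * specRad A ^ (2 * L) ≤ stageCost A R Q 1 (L + 1) := fun L =>
    (hcA L).trans (trace_mul_conj_pow_le_stageCost_one hQ.posSemidef hR.posSemidef L)
  have hterm : ∀ i, (1 - g 1) * c ≤ virtualCostTerm g l (stageCost A R Q 1) i :=
    one_sub_mul_le_virtualCostTerm hc.le (fun k => Set.Ioo_subset_Icc_self (hg k)) hgmono hl
      hcost (stageCost_mono hQ.posSemidef hR.posSemidef 1) hcon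
  have hδ : 0 < (1 - g 1) * c := mul_pos (sub_pos.2 (hg 1).2) hc
  exact hδ.not_ge (ge_of_tendsto hsum.tendsto_atTop_zero (.of_forall hterm))
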